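/- Extension property: Let P be a special product rule. Every function D : X → ℚ[X]⁰ extends uniquely to a ℚ-linear map D̃ : ℚ[X]⁰ → ℚ[X]⁰ satisfying D̃(α·β) = P(α, D̃α, β, D̃β) for all α, β ∈ ℚ[X]⁰, where P(α, D̃α, β, D̃β) denotes the evaluation of the term P in the commutative polynomial ring under the substitution x ↦ α, ẋ ↦ D̃α, y ↦ β, ẏ ↦ D̃β. -/

import Mathlib

namespace PSeries

/-- A (formal power) series over alphabet `A` with rational coefficients. -/
abbrev Series (A : Type) : Type := List A → ℚ

/-- Left derivative of a series by a letter. -/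
def deriv {A : Type} (a : A) (f : Series A) : Series A := fun w => f (a :: w)

/-- Right derivative of a series by a letter. -/
def derivR {A : Type} (b : A) (f : Series A) : Series A := fun w => f (w ++ [b])

/-- Reversal of a series. -/
def rev {A : Type} (f : Series A) : Series A := fun w => f w.reverse

/-- Terms over a set of variables `X`:  `u ::= x | 0 | c·u | u + v | u * v`. -/
inductive Term (X : Type) : Type
  | var : X → Term X
  | zero : Term X
  | smul : ℚ → Term X → Term X
  | add : Term X → Term X → Term X
  | mul : Term X → Term X → Term X

namespace Term

/-- Simultaneous substitution of terms for variables. -/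
def subst {X Y : Type} : Term X → (X → Term Y) → Term Y
  | var x, ρ => ρ x
  | zero, _ => zero
  | smul c u, ρ => smul c (u.subst ρ)
  | add u v, ρ => add (u.subst ρ) (v.subst ρ)
  | mul u v, ρ => mul (u.subst ρ) (v.subst ρ)

/-- Semantics of a term on series, with the product symbol interpreted by `m`. -/
def evalS {A X : Type} (m : Series A → Series A → Series A) :
    Term X → (X → Series A) → Series A
  | var x, ρ => ρ x
  | zero, _ => 0
  | smul c u, ρ => c • u.evalS m ρ
  | add u v, ρ => u.evalS m ρ + v.evalS m ρ
  | mul u v, ρ => m (u.evalS m ρ) (v.evalS m ρ)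

/-- Evaluation of a term in the rationals (product is rational multiplication). -/
def evalQ {X : Type} : Term X → (X → ℚ) → ℚ
  | var x, F => F x
  | zero, _ => 0
  | smul c u, F => c * u.evalQ F
  | add u v, F => u.evalQ F + v.evalQ F
  | mul u v, F => u.evalQ F * v.evalQ F

/-- Evaluation of a term in a commutative `ℚ`-algebra. -/
def evalA {R : Type} [CommRing R] [Algebra ℚ R] {X : Type} :
    Term X → (X → R) → R
  | var x, ρ => ρ x
  | zero, _ => 0
  | smul c u, ρ => c • u.evalA ρ
  | add u v, ρ => u.evalA ρ + v.evalA ρ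
  | mul u v, ρ => u.evalA ρ * v.evalA ρ

end Term

/-- `m` is the `P`-product for the product rule `P`; that is, `m` satisfies the
two defining equations `(f*g)(ε) = f(ε)·g(ε)` and `δ_a (f*g) = P(f, δ_a f, g, δ_a g)`. -/
def IsPProduct {A : Type} (P : Term (Fin 4)) (m : Series A → Series A → Series A) : Prop :=
  (∀ f g : Series A, m f g [] = f [] * g []) ∧
  (∀ (f g : Series A) (a : A),
    deriv a (m f g) = P.evalS m ![f, deriv a f, g, deriv a g])

/-- The smallest congruence on terms generated by the axioms of
commutative (not necessarily unital) `ℚ`-algebras. -/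
inductive TEq {X : Type} : Term X → Term X → Prop
  | refl (u : Term X) : TEq u u
  | symm {u v : Term X} : TEq u v → TEq v u
  | trans {u v w : Term X} : TEq u v → TEq v w → TEq u w
  | smul_congr (c : ℚ) {u v : Term X} : TEq u v → TEq (.smul c u) (.smul c v)
  | add_congr {u u' v v' : Term X} : TEq u u' → TEq v v' → TEq (.add u v) (.add u' v')
  | mul_congr {u u' v v' : Term X} : TEq u u' → TEq v v' → TEq (.mul u v) (.mul u' v')
  | one_smul (u : Term X) : TEq (.smul 1 u) u
  | smul_smul (c d : ℚ) (u : Term X) : TEq (.smul c (.smul d u)) (.smul (c * d) u)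
  | add_smul (c d : ℚ) (u : Term X) : TEq (.smul (c + d) u) (.add (.smul c u) (.smul d u))
  | smul_add (c : ℚ) (u v : Term X) : TEq (.smul c (.add u v)) (.add (.smul c u) (.smul c v))
  | add_zero (u : Term X) : TEq (.add u .zero) u
  | add_assoc (u v w : Term X) : TEq (.add (.add u v) w) (.add u (.add v w))
  | add_comm (u v : Term X) : TEq (.add u v) (.add v u)
  | neg_cancel (u : Term X) : TEq (.add u (.smul (-1) u)) .zero
  | mul_addl (u v w : Term X) : TEq (.mul (.add u v) w) (.add (.mul u w) (.mul v w))
  | mul_smull (c : ℚ) (u v : Term X) : TEq (.mul (.smul c u) v) (.smul c (.mul u v))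
  | mul_assoc (u v w : Term X) : TEq (.mul (.mul u v) w) (.mul u (.mul v w))
  | mul_comm (u v : Term X) : TEq (.mul u v) (.mul v u)

/-- A product rule `P` (a term over the variables `x = 0, ẋ = 1, y = 2, ẏ = 3`)
is special: it satisfies (P-add), (P-assoc) and (P-comm) up to the congruence `TEq`.
In the first two equations the six variables are `x = 0, ẋ = 1, y = 2, ẏ = 3, z = 4, ż = 5`. -/
def Special (P : Term (Fin 4)) : Prop :=
  TEq (P.subst (![.add (.var 0) (.var 2), .add (.var 1) (.var 3), .var 4, .var 5] :
        Fin 4 → Term (Fin 6)))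
      (.add (P.subst (![.var 0, .var 1, .var 4, .var 5] : Fin 4 → Term (Fin 6)))
            (P.subst (![.var 2, .var 3, .var 4, .var 5] : Fin 4 → Term (Fin 6)))) ∧
  TEq (P.subst (![.var 0, .var 1, .mul (.var 2) (.var 4),
        P.subst (![.var 2, .var 3, .var 4, .var 5] : Fin 4 → Term (Fin 6))] :
        Fin 4 → Term (Fin 6)))
      (P.subst (![.mul (.var 0) (.var 2),
        P.subst (![.var 0, .var 1, .var 2, .var 3] : Fin 4 → Term (Fin 6)), .var 4, .var 5] :
        Fin 4 → Term (Fin 6))) ∧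
  TEq P (P.subst (![.var 2, .var 3, .var 0, .var 1] : Fin 4 → Term (Fin 4)))

/-- A binary operation on series is bilinear, associative and commutative. -/
def IsBAC {A : Type} (m : Series A → Series A → Series A) : Prop :=
  (∀ f g h : Series A, m (f + g) h = m f h + m g h) ∧
  (∀ (c : ℚ) (f g : Series A), m (c • f) g = c • m f g) ∧
  (∀ f g h : Series A, m f (g + h) = m f g + m f h) ∧
  (∀ (c : ℚ) (f g : Series A), m f (c • g) = c • m f g) ∧
  (∀ f g h : Series A, m (m f g) h = m f (m g h)) ∧
  (∀ f g : Series A, m f g = m g f)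

/-- The smallest set of series containing `0` and the generators `G`, closed under
scalar multiplication, addition, and the product `m`. -/
inductive InAlg {A : Type} (m : Series A → Series A → Series A) (G : Set (Series A)) :
    Series A → Prop
  | zero : InAlg m G 0
  | gen {g : Series A} : g ∈ G → InAlg m G g
  | smul (c : ℚ) {f : Series A} : InAlg m G f → InAlg m G (c • f)
  | add {f g : Series A} : InAlg m G f → InAlg m G g → InAlg m G (f + g)
  | mul {f g : Series A} : InAlg m G f → InAlg m G g → InAlg m G (m f g)

/-- `f` is `P`-finite (w.r.t. the `P`-product `m`): there are finitely many generators
`g 0 = f, g 1, …` all of whose left derivatives lie in the algebra they generate. -/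
def PFinite {A : Type} (m : Series A → Series A → Series A) (f : Series A) : Prop :=
  ∃ (k : ℕ) (g : Fin (k + 1) → Series A),
    g 0 = f ∧ ∀ (i : Fin (k + 1)) (a : A), InAlg m (Set.range g) (deriv a (g i))

/-- A `P`-automaton: output function `out` and transition function `tr`. -/
structure PAutomaton (A X : Type) where
  out : X → ℚ
  tr : A → X → Term X

/-- The `P`-extension of a function `D : X → Term X` to all terms. -/
def pext {X : Type} (P : Term (Fin 4)) (D : X → Term X) : Term X → Term X
  | .var x => D x
  | .zero => .zero
  | .smul c u => .smul c (pext P D u)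
  | .add u v => .add (pext P D u) (pext P D v)
  | .mul u v => P.subst ![u, pext P D u, v, pext P D v]

/-- Homomorphic extension of the output function of a `P`-automaton to all terms. -/
def PAutomaton.outT {A X : Type} (𝒜 : PAutomaton A X) (u : Term X) : ℚ :=
  u.evalQ 𝒜.out

/-- Extension of the (`P`-extended) transition function of a `P`-automaton to words. -/
def trWord {A X : Type} (P : Term (Fin 4)) (𝒜 : PAutomaton A X) :
    List A → Term X → Term X
  | [], u => u
  | a :: w, u => trWord P 𝒜 w (pext P (𝒜.tr a) u)

/-- The semantics of a `P`-automaton: the unique map with `⟦α⟧(ε) = F(α)` and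
`δ_a ⟦α⟧ = ⟦Δ̃_a α⟧`; concretely, `⟦α⟧(w) = F(Δ̃_w α)`. -/
def asem {A X : Type} (P : Term (Fin 4)) (𝒜 : PAutomaton A X) (u : Term X) : Series A :=
  fun w => (trWord P 𝒜 w u).evalQ 𝒜.out

/-- `ℚ[X]⁰`: polynomials in commuting variables `X` with zero constant term. -/
noncomputable def Aug (X : Type) : Submodule ℚ (MvPolynomial X ℚ) where
  carrier := {p | MvPolynomial.coeff 0 p = 0}
  add_mem' := by
    intro a b ha hb
    simp only [Set.mem_setOf_eq, MvPolynomial.coeff_add] at *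
    rw [ha, hb, add_zero]
  zero_mem' := by simp
  smul_mem' := by
    intro c p hp
    simp only [Set.mem_setOf_eq, MvPolynomial.coeff_smul] at *
    rw [hp, smul_zero]

/-- The variable `x` as an element of `ℚ[X]⁰`. -/
noncomputable def Aug.var {X : Type} (x : X) : Aug X :=
  ⟨MvPolynomial.X x, by
    show MvPolynomial.coeff 0 (MvPolynomial.X x) = 0
    simp [MvPolynomial.coeff_X']⟩

/-- The product of two elements of `ℚ[X]⁰`, again in `ℚ[X]⁰`. -/
noncomputable def Aug.mul {X : Type} (p q : Aug X) : Aug X :=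
  ⟨(p : MvPolynomial X ℚ) * (q : MvPolynomial X ℚ), by
    show MvPolynomial.coeff 0 _ = 0
    have hp : MvPolynomial.constantCoeff (p : MvPolynomial X ℚ) = 0 := p.2
    have hq : MvPolynomial.constantCoeff (q : MvPolynomial X ℚ) = 0 := q.2
    have := map_mul MvPolynomial.constantCoeff (p : MvPolynomial X ℚ) (q : MvPolynomial X ℚ)
    simpa [MvPolynomial.constantCoeff_eq, hp, hq] using this⟩

/-- A polynomial `P`-automaton over variables `X`. -/
structure PolyAutomaton (A X : Type) where
  out : X → ℚ
  tr : A → X → Aug X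

/-- Extension to words of a family of (extended) transition maps on `ℚ[X]⁰`. -/
noncomputable def trWordP {A X : Type} (Dt : A → (Aug X →ₗ[ℚ] Aug X)) : List A → Aug X → Aug X
  | [], p => p
  | a :: w, p => trWordP Dt w (Dt a p)

/-- The ideal of `ℚ[X]` generated by all polynomials reachable from the initial
variable `x1` by words of length at most `n`. -/
noncomputable def reachIdeal {A X : Type} (Dt : A → (Aug X →ₗ[ℚ] Aug X)) (x1 : X) (n : ℕ) :
    Ideal (MvPolynomial X ℚ) :=
  Ideal.span {p : MvPolynomial X ℚ |
    ∃ w : List A, w.length ≤ n ∧ p = ((trWordP Dt w (Aug.var x1) : Aug X) : MvPolynomial X ℚ)}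

/-!
For a special product rule `P`, pairs `(α, α̇)` multiplied by `(α, α̇) (β, β̇) = (α β, P(α, α̇, β, β̇))`
form a commutative non-unital `ℚ`-algebra: (P-add) gives bilinearity, (P-assoc) associativity and
(P-comm) commutativity. The universal property of `ℚ[X]` extends `x ↦ (x, D x)` to an algebra map
into the unitization of this algebra; on `ℚ[X]⁰` its first component is the identity and its second
component is `D̃`. Uniqueness holds because `ℚ[X]⁰` is spanned by products of variables.
-/

section Soundness

variable {R : Type} [CommRing R] [Algebra ℚ R]

theorem TEq.evalA_eq {X : Type} {u v : Term X} (h : TEq u v) (ρ : X → R) :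
    u.evalA ρ = v.evalA ρ := by
  induction h with
  | refl => rfl
  | symm _ ih => exact ih.symm
  | trans _ _ ih₁ ih₂ => exact ih₁.trans ih₂
  | smul_congr c _ ih => simp [Term.evalA, ih]
  | add_congr _ _ ih₁ ih₂ => simp [Term.evalA, ih₁, ih₂]
  | mul_congr _ _ ih₁ ih₂ => simp [Term.evalA, ih₁, ih₂]
  | one_smul => simp [Term.evalA]
  | smul_smul => simp [Term.evalA, mul_smul]
  | add_smul => simp [Term.evalA, _root_.add_smul]
  | smul_add => simp [Term.evalA]
  | add_zero => simp [Term.evalA]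
  | add_assoc => simp [Term.evalA, _root_.add_assoc]
  | add_comm => simp [Term.evalA, _root_.add_comm]
  | neg_cancel => simp [Term.evalA]
  | mul_addl => simp [Term.evalA, add_mul]
  | mul_smull => simp [Term.evalA]
  | mul_assoc => simp [Term.evalA, _root_.mul_assoc]
  | mul_comm => simp [Term.evalA, _root_.mul_comm]

theorem Term.evalA_subst {X Y : Type} (u : Term X) (σ : X → Term Y) (ρ : Y → R) :
    (u.subst σ).evalA ρ = u.evalA fun x => (σ x).evalA ρ := by
  induction u with
  | var => rfl
  | zero => rfl
  | smul c u ih => simp [Term.subst, Term.evalA, ih]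
  | add u v ih₁ ih₂ => simp [Term.subst, Term.evalA, ih₁, ih₂]
  | mul u v ih₁ ih₂ => simp [Term.subst, Term.evalA, ih₁, ih₂]

theorem Term.evalA_subst_vecCons {Y : Type} (u : Term (Fin 4)) (a b c d : Term Y) (ρ : Y → R) :
    (u.subst ![a, b, c, d]).evalA ρ = u.evalA ![a.evalA ρ, b.evalA ρ, c.evalA ρ, d.evalA ρ] := by
  rw [Term.evalA_subst]
  congr 1
  funext i
  fin_cases i <;> rfl

namespace Special

variable {P : Term (Fin 4)}

theorem evalA_add (hP : Special P) (p d p' d' q e : R) :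
    P.evalA ![p + p', d + d', q, e] = P.evalA ![p, d, q, e] + P.evalA ![p', d', q, e] := by
  simpa [Term.evalA, Term.evalA_subst_vecCons] using hP.1.evalA_eq ![p, d, p', d', q, e]

theorem evalA_assoc (hP : Special P) (p d q e r s : R) :
    P.evalA ![p, d, q * r, P.evalA ![q, e, r, s]] =
      P.evalA ![p * q, P.evalA ![p, d, q, e], r, s] := by
  simpa [Term.evalA, Term.evalA_subst_vecCons] using hP.2.1.evalA_eq ![p, d, q, e, r, s]

theorem evalA_comm (hP : Special P) (p d q e : R) :
    P.evalA ![p, d, q, e] = P.evalA ![q, e, p, d] := by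
  simpa [Term.evalA, Term.evalA_subst_vecCons] using hP.2.2.evalA_eq ![p, d, q, e]

theorem evalA_zero (hP : Special P) (q e : R) : P.evalA ![0, 0, q, e] = 0 := by
  simpa using hP.evalA_add 0 0 0 0 q e

theorem evalA_smul (hP : Special P) (c : ℚ) (p d q e : R) :
    P.evalA ![c • p, c • d, q, e] = c • P.evalA ![p, d, q, e] := by
  simpa using map_rat_smul (AddMonoidHom.mk' (fun c : ℚ => P.evalA ![c • p, c • d, q, e])
    fun a b => by simp only [_root_.add_smul, hP.evalA_add]) c 1

end Special

end Soundness

/-- `R × R` with the multiplication `(α, α̇) (β, β̇) = (α β, P(α, α̇, β, β̇))` selected by the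
phantom index `P`. -/
def PJet (_P : Term (Fin 4)) (R : Type) : Type := R × R

namespace PJet

variable {P : Term (Fin 4)} {R : Type}

def mk (a b : R) : PJet P R := (a, b)

def fst (u : PJet P R) : R := Prod.fst (α := R) (β := R) u

def snd (u : PJet P R) : R := Prod.snd (α := R) (β := R) u

@[ext]
theorem ext {u v : PJet P R} (h₁ : u.fst = v.fst) (h₂ : u.snd = v.snd) : u = v :=
  Prod.ext h₁ h₂

@[simp] theorem fst_mk (a b : R) : (mk a b : PJet P R).fst = a := rfl
@[simp] theorem snd_mk (a b : R) : (mk a b : PJet P R).snd = b := rfl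

variable [CommRing R]

instance : AddCommGroup (PJet P R) := inferInstanceAs (AddCommGroup (R × R))

@[simp] theorem fst_add (u v : PJet P R) : (u + v).fst = u.fst + v.fst := rfl
@[simp] theorem snd_add (u v : PJet P R) : (u + v).snd = u.snd + v.snd := rfl
@[simp] theorem fst_zero : (0 : PJet P R).fst = 0 := rfl
@[simp] theorem snd_zero : (0 : PJet P R).snd = 0 := rfl

variable [Algebra ℚ R]

instance : Module ℚ (PJet P R) := inferInstanceAs (Module ℚ (R × R))

instance : Mul (PJet P R) :=
  ⟨fun u v => mk (u.fst * v.fst) (P.evalA ![u.fst, u.snd, v.fst, v.snd])⟩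

@[simp] theorem fst_smul (c : ℚ) (u : PJet P R) : (c • u).fst = c • u.fst := rfl
@[simp] theorem snd_smul (c : ℚ) (u : PJet P R) : (c • u).snd = c • u.snd := rfl
@[simp] theorem fst_mul (u v : PJet P R) : (u * v).fst = u.fst * v.fst := rfl
@[simp] theorem snd_mul (u v : PJet P R) :
    (u * v).snd = P.evalA ![u.fst, u.snd, v.fst, v.snd] := rfl

variable [hP : Fact (Special P)]

instance : NonUnitalCommRing (PJet P R) where
  left_distrib u v w := by
    ext
    · simp [mul_add]
    · simp [hP.out.evalA_comm u.fst, hP.out.evalA_add]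
  right_distrib u v w := by ext <;> simp [add_mul, hP.out.evalA_add]
  zero_mul u := by ext <;> simp [hP.out.evalA_zero]
  mul_zero u := by ext <;> simp [hP.out.evalA_comm u.fst, hP.out.evalA_zero]
  mul_assoc u v w := by ext <;> simp [mul_assoc, hP.out.evalA_assoc]
  mul_comm u v := by ext <;> simp [mul_comm, hP.out.evalA_comm u.fst]

instance : IsScalarTower ℚ (PJet P R) (PJet P R) :=
  ⟨fun c u v => by ext <;> simp [hP.out.evalA_smul]⟩

instance : SMulCommClass ℚ (PJet P R) (PJet P R) :=
  ⟨fun c u v => by ext <;> simp [hP.out.evalA_comm u.fst, hP.out.evalA_smul]⟩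

def fstHom : PJet P R →ₙₐ[ℚ] R where
  toFun := fst
  map_smul' _ _ := rfl
  map_zero' := rfl
  map_add' _ _ := rfl
  map_mul' _ _ := rfl

@[simp] theorem fstHom_apply (u : PJet P R) : fstHom u = u.fst := rfl

end PJet

namespace Aug

open MvPolynomial

variable {σ : Type}

theorem mem_iff {f : MvPolynomial σ ℚ} : f ∈ Aug σ ↔ constantCoeff f = 0 := Iff.rfl

theorem mul_mem_right {f : MvPolynomial σ ℚ} (g : MvPolynomial σ ℚ) (hf : f ∈ Aug σ) :
    f * g ∈ Aug σ := by
  rw [mem_iff] at *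
  rw [map_mul, hf, zero_mul]

@[elab_as_elim]
theorem induction_on {motive : Aug σ → Prop} (p : Aug σ) (zero : motive 0)
    (add : ∀ p q, motive p → motive q → motive (p + q))
    (smul : ∀ (c : ℚ) p, motive p → motive (c • p)) (var : ∀ x, motive (Aug.var x))
    (mul_var : ∀ p x, motive p → motive (Aug.mul p (Aug.var x))) : motive p := by
  let E : Submodule ℚ (MvPolynomial σ ℚ) :=
    { carrier := {f | ∃ h : f ∈ Aug σ, motive ⟨f, h⟩}
      add_mem' := fun ⟨_, hp⟩ ⟨_, hq⟩ => ⟨_, add _ _ hp hq⟩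
      zero_mem' := ⟨_, zero⟩
      smul_mem' := fun c _ ⟨_, hp⟩ => ⟨_, smul c _ hp⟩ }
  have key (f : MvPolynomial σ ℚ) : f - C (constantCoeff f) ∈ E := by
    induction f using MvPolynomial.induction_on with
    | C a => simp [E.zero_mem]
    | add f g hf hg => simpa [add_sub_add_comm] using E.add_mem hf hg
    | mul_X f x hf =>
      have h : f * X x - C (constantCoeff (f * X x)) =
          (f - C (constantCoeff f)) * X x + constantCoeff f • X x := by
        simp only [map_mul, constantCoeff_X, mul_zero, map_zero, sub_zero, smul_eq_C_mul]
        ring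
      obtain ⟨hmem, hf⟩ := hf
      have hmul : Aug.mul ⟨_, hmem⟩ (Aug.var x) = ⟨_, Aug.mul_mem_right (X x) hmem⟩ := rfl
      rw [h]
      exact E.add_mem ⟨_, hmul ▸ mul_var _ x hf⟩ (E.smul_mem _ ⟨_, var x⟩)
  obtain ⟨_, hp⟩ := key p
  simpa [mem_iff.mp p.2] using hp

end Aug

theorem Term.evalA_mem_aug {σ Y : Type} (u : Term Y) {ρ : Y → MvPolynomial σ ℚ}
    (hρ : ∀ y, ρ y ∈ Aug σ) : u.evalA ρ ∈ Aug σ := by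
  induction u with
  | var y => exact hρ y
  | zero => exact (Aug σ).zero_mem
  | smul c u ih => exact (Aug σ).smul_mem c ih
  | add u v ih₁ ih₂ => exact (Aug σ).add_mem ih₁ ih₂
  | mul u v ih₁ _ => exact Aug.mul_mem_right _ ih₁

section Jet

open MvPolynomial

variable {σ : Type} (P : Term (Fin 4)) [Fact (Special P)] (D : σ → MvPolynomial σ ℚ)

noncomputable def jetLift : MvPolynomial σ ℚ →ₐ[ℚ] Unitization ℚ (PJet P (MvPolynomial σ ℚ)) :=
  aeval fun x => (PJet.mk (X x) (D x) : PJet P (MvPolynomial σ ℚ))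

theorem jetLift_X (x : σ) : jetLift P D (X x) = (PJet.mk (X x) (D x) : PJet P _) :=
  aeval_X _ x

theorem fst_jetLift (f : MvPolynomial σ ℚ) : (jetLift P D f).fst = constantCoeff f := by
  have h : (Unitization.fstHom ℚ _).comp (jetLift P D) = aeval fun _ => 0 :=
    algHom_ext fun x => by simp [jetLift_X]
  simpa using DFunLike.congr_fun h f

theorem lift_fstHom_jetLift (f : MvPolynomial σ ℚ) :
    Unitization.lift PJet.fstHom (jetLift P D f) = f := by
  have h : (Unitization.lift PJet.fstHom).comp (jetLift P D) = AlgHom.id ℚ _ :=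
    algHom_ext fun x => by simp [jetLift_X]
  exact DFunLike.congr_fun h f

theorem jetLift_of_mem_aug {f : MvPolynomial σ ℚ} (hf : f ∈ Aug σ) :
    jetLift P D f = (PJet.mk f (jetLift P D f).snd.snd : PJet P _) := by
  have hfst := fst_jetLift P D f
  rw [Aug.mem_iff.mp hf] at hfst
  have hsnd := lift_fstHom_jetLift P D f
  simp only [Unitization.lift_apply, NonUnitalAlgHom.toAlgHom_apply, hfst, map_zero, zero_add,
    PJet.fstHom_apply] at hsnd
  exact Unitization.ext (by simpa using hfst) (PJet.ext (by simpa using hsnd) rfl)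

noncomputable def jetDeriv : MvPolynomial σ ℚ →ₗ[ℚ] MvPolynomial σ ℚ :=
  (LinearMap.snd ℚ _ _ : PJet P (MvPolynomial σ ℚ) →ₗ[ℚ] _) ∘ₗ Unitization.sndHom ℚ ℚ _ ∘ₗ
    (jetLift P D).toLinearMap

theorem jetDeriv_apply (f : MvPolynomial σ ℚ) : jetDeriv P D f = (jetLift P D f).snd.snd := rfl

theorem jetDeriv_X (x : σ) : jetDeriv P D (X x) = D x := by
  simp [jetDeriv_apply, jetLift_X]

theorem jetDeriv_mul {f g : MvPolynomial σ ℚ} (hf : f ∈ Aug σ) (hg : g ∈ Aug σ) :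
    jetDeriv P D (f * g) = P.evalA ![f, jetDeriv P D f, g, jetDeriv P D g] := by
  rw [jetDeriv_apply, map_mul, jetLift_of_mem_aug P D hf, jetLift_of_mem_aug P D hg,
    ← Unitization.inr_mul]
  rfl

theorem jetDeriv_mem_aug (hD : ∀ x, D x ∈ Aug σ) {f : MvPolynomial σ ℚ} (hf : f ∈ Aug σ) :
    jetDeriv P D f ∈ Aug σ := by
  suffices ∀ p : Aug σ, jetDeriv P D p ∈ Aug σ from this ⟨f, hf⟩
  intro p
  induction p using Aug.induction_on with
  | zero => simp
  | add p q hp hq => simpa using (Aug σ).add_mem hp hq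
  | smul c p hp => simpa using (Aug σ).smul_mem c hp
  | var x => simpa [Aug.var, jetDeriv_X] using hD x
  | mul_var p x hp =>
    refine (jetDeriv_mul P D p.2 (Aug.var x).2).symm ▸ Term.evalA_mem_aug P fun i => ?_
    fin_cases i
    exacts [p.2, hp, (Aug.var x).2, jetDeriv_X P D x ▸ hD x]

end Jet

section AugDeriv

variable {σ : Type} (P : Term (Fin 4)) [Fact (Special P)] (D : σ → Aug σ)

noncomputable def augDeriv : Aug σ →ₗ[ℚ] Aug σ :=
  (jetDeriv P fun x => D x).restrict fun _ => jetDeriv_mem_aug P _ fun x => (D x).2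

theorem augDeriv_var (x : σ) : augDeriv P D (Aug.var x) = D x :=
  Subtype.ext (jetDeriv_X P _ x)

theorem coe_augDeriv_mul (p q : Aug σ) :
    (augDeriv P D (Aug.mul p q) : MvPolynomial σ ℚ) =
      P.evalA ![(p : MvPolynomial σ ℚ), augDeriv P D p, q, augDeriv P D q] :=
  jetDeriv_mul P _ p.2 q.2

end AugDeriv

/-- **Extension property.** For a special product rule `P`, every function
`D : X → ℚ[X]⁰` extends uniquely to a `ℚ`-linear map `D̃ : ℚ[X]⁰ → ℚ[X]⁰` satisfying
`D̃(α·β) = P(α, D̃α, β, D̃β)`. -/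
theorem extension_property {X : Type} (P : Term (Fin 4)) (hP : Special P)
    (D : X → Aug X) :
    ∃! Dt : Aug X →ₗ[ℚ] Aug X,
      (∀ x : X, Dt (Aug.var x) = D x) ∧
      (∀ p q : Aug X,
        ((Dt (Aug.mul p q) : Aug X) : MvPolynomial X ℚ) =
          Term.evalA P ![(p : MvPolynomial X ℚ), ((Dt p : Aug X) : MvPolynomial X ℚ),
            ((q : Aug X) : MvPolynomial X ℚ), ((Dt q : Aug X) : MvPolynomial X ℚ)]) := by
  have : Fact (Special P) := ⟨hP⟩
  refine ⟨augDeriv P D, ⟨augDeriv_var P D, coe_augDeriv_mul P D⟩, ?_⟩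
  rintro Dt ⟨hvar, hmul⟩
  ext1 p
  induction p using Aug.induction_on with
  | zero => simp
  | add p q hp hq => simp [hp, hq]
  | smul c p hp => simp [hp]
  | var x => rw [hvar, augDeriv_var]
  | mul_var p x hp =>
    apply Subtype.ext
    rw [hmul, coe_augDeriv_mul, hp, hvar, augDeriv_var]

end PSeries
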